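/- arXiv:1601.06039 — 3 statements merged into one kernel-verified Lean document; each statement's English description precedes it below -/
import Mathlib

section
/- Let t be a probability distribution, t* its reverse I-projection onto P_M (so t*_i = 1/M for i ∈ K = {i : t_i < ν/M} and t*_i = t_i/ν otherwise), and let t^vd be a variational-distance-optimal M-type approximation of t* satisfying t^vd_i = 1/M for all i ∈ K. Then D(t‖t^vd) = D(t‖t*) + ν·D(t*‖t^vd). -/
open Finset

/-- Informational divergence D(p‖q) (real-valued, summed over the support of p). -/
noncomputable def Dr {n : ℕ} (p q : Fin n → ℝ) : ℝ :=
  ∑ i, if 0 < p i then p i * Real.log (p i / q i) else 0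

lemma sum_split_pair {n : ℕ} {β : Type*} [AddCommMonoid β] (g : Fin n → β) {i j : Fin n}
    (hij : j ≠ i) :
    ∑ k, g k = g i + g j + ∑ k ∈ (Finset.univ.erase i).erase j, g k := by
  rw [← Finset.sum_erase_add Finset.univ g (Finset.mem_univ i),
      ← Finset.sum_erase_add _ g (Finset.mem_erase.mpr ⟨hij, Finset.mem_univ j⟩)]
  abel

theorem pythagorean_identity
    {n M : ℕ} (hn : 0 < n) (hnM : n ≤ M)
    (t : Fin n → ℝ) (ht_pos : ∀ i, 0 < t i) (ht_sum : ∑ i, t i = 1)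
    (ν : ℝ) (hν : 0 < ν)
    (K : Finset (Fin n)) (hK : K = Finset.univ.filter (fun i => t i < ν / M))
    (tstar : Fin n → ℝ)
    (htstar : ∀ i, tstar i = if i ∈ K then 1 / (M : ℝ) else t i / ν)
    (hnorm : ∑ i, tstar i = 1)
    (c : Fin n → ℕ) (hc : ∑ i, c i = M)
    (tvd : Fin n → ℝ) (htvd : ∀ i, tvd i = (c i : ℝ) / M)
    (hvdopt : ∀ c' : Fin n → ℕ, ∑ i, c' i = M →
      ∑ i, |tvd i - tstar i| ≤ ∑ i, |(c' i : ℝ) / M - tstar i|)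
    (htvdK : ∀ i ∈ K, tvd i = 1 / (M : ℝ)) :
    Dr t tvd = Dr t tstar + ν * Dr tstar tvd := by
  have hM0 : 0 < M := lt_of_lt_of_le hn hnM
  have hMR : (0:ℝ) < M := by exact_mod_cast hM0
  have hMne : (M:ℝ) ≠ 0 := ne_of_gt hMR
  have hts_pos : ∀ i, 0 < tstar i := by
    intro i
    rw [htstar i]
    split
    · positivity
    · exact div_pos (ht_pos i) hν
  have hts_ge : ∀ i, 1/(M:ℝ) ≤ tstar i := by
    intro i
    rw [htstar i]
    split
    · exact le_refl _
    · rename_i hiK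
      have : ¬ (t i < ν / M) := by
        intro h
        exact hiK (by rw [hK]; simpa using h)
      push_neg at this
      rw [div_le_div_iff₀ hMR hν]
      rw [div_le_iff₀ hMR] at this
      linarith
  -- every c i is positive
  have hc_pos : ∀ i, 0 < c i := by
    by_contra h
    push_neg at h
    obtain ⟨j, hj⟩ := h
    have hcj : c j = 0 := Nat.le_zero.mp hj
    set f : Fin n → ℝ := fun k => (c k : ℝ)/M - tstar k with hf
    clear_value f
    have hsumf : ∑ k, f k = 0 := by
      have h1 : ∑ k, ((c k : ℝ)/M) = 1 := by
        rw [← Finset.sum_div]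
        rw [show ∑ k, ((c k : ℝ)) = (M : ℝ) by exact_mod_cast congrArg (Nat.cast (R := ℝ)) hc]
        field_simp
      simp only [hf]
      rw [Finset.sum_sub_distrib, h1, hnorm]
      ring
    have hfj : f j ≤ -(1/M) := by
      have := hts_ge j
      simp only [hf, hcj]
      push_cast
      simp only [zero_div]
      linarith
    have hfj' : f j < 0 := lt_of_le_of_lt hfj (neg_lt_zero.mpr (by positivity))
    have hex : ∃ i, 0 < f i := by
      by_contra hno
      push_neg at hno
      have h1 : ∑ k ∈ Finset.univ.erase j, f k ≤ 0 :=
        Finset.sum_nonpos (fun k _ => hno k)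
      have h2 : ∑ k, f k = f j + ∑ k ∈ Finset.univ.erase j, f k :=
        (Finset.add_sum_erase _ f (Finset.mem_univ j)).symm
      rw [hsumf] at h2
      linarith
    obtain ⟨i, hfi⟩ := hex
    have hij : j ≠ i := by
      intro h; rw [h] at hfj'; linarith
    have hci : 1 ≤ c i := by
      by_contra hci
      push_neg at hci
      interval_cases h : c i
      · simp only [hf, h] at hfi
        push_cast at hfi
        have := hts_pos i
        simp only [zero_div] at hfi
        linarith
    set c' : Fin n → ℕ := fun k => if k = i then c i - 1 else if k = j then c j + 1 else c k
      with hc'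
    have hc'i : c' i = c i - 1 := by simp [hc']
    have hc'j : c' j = c j + 1 := by simp [hc', hij]
    have hc'sum : ∑ k, c' k = M := by
      rw [sum_split_pair c' hij, sum_split_pair c hij] at *
      have htail : ∑ k ∈ (Finset.univ.erase i).erase j, c' k
          = ∑ k ∈ (Finset.univ.erase i).erase j, c k := by
        apply Finset.sum_congr rfl
        intro k hk
        simp only [Finset.mem_erase] at hk
        simp [hc', hk.1, hk.2.1]
      rw [hc'i, hc'j, htail, hcj]
      omega
    have hopt := hvdopt c' hc'sum
    have hlt : ∑ k, |(c' k : ℝ)/M - tstar k| < ∑ k, |tvd k - tstar k| := by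
      have htvdeq : ∀ k, |tvd k - tstar k| = |f k| := by
        intro k; rw [htvd k, hf]
      simp only [htvdeq]
      rw [sum_split_pair (fun k => |(c' k : ℝ)/M - tstar k|) hij,
          sum_split_pair (fun k => |f k|) hij]
      have htail : ∑ k ∈ (Finset.univ.erase i).erase j, |(c' k : ℝ)/M - tstar k|
          = ∑ k ∈ (Finset.univ.erase i).erase j, |f k| := by
        apply Finset.sum_congr rfl
        intro k hk
        simp only [Finset.mem_erase] at hk
        simp [hc', hk.1, hk.2.1, hf]
      rw [htail]
      have e1 : ((c' i : ℝ))/M - tstar i = f i - 1/M := by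
        rw [hc'i]
        rw [Nat.cast_sub hci]
        simp only [hf]
        push_cast
        ring
      have e2 : ((c' j : ℝ))/M - tstar j = 1/M - tstar j := by
        rw [hc'j, hcj]
        push_cast
        ring
      have h1M0 : (0:ℝ) < 1/(M:ℝ) := by positivity
      have a1 : |f i - 1/(M:ℝ)| < f i + 1/(M:ℝ) := by
        rw [abs_lt]
        constructor <;> linarith
      have a2 : |(1:ℝ)/M - tstar j| = tstar j - 1/M := by
        rw [abs_of_nonpos (by linarith [hts_ge j]), neg_sub]
      have a3 : |f i| = f i := abs_of_pos hfi
      have a4 : |f j| = tstar j := by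
        simp only [hf, hcj]
        push_cast
        rw [zero_div, zero_sub, abs_neg, abs_of_pos (hts_pos j)]
      have h1M : (0:ℝ) < 1/M := by positivity
      rw [e1, e2, a2, a3, a4]
      linarith
    linarith
  have htvd_pos : ∀ i, 0 < tvd i := by
    intro i
    rw [htvd i]
    have : (0:ℝ) < (c i : ℝ) := by exact_mod_cast hc_pos i
    positivity
  -- rewrite the divergences
  have e1 : Dr t tvd = ∑ i, t i * Real.log (t i / tvd i) :=
    Finset.sum_congr rfl fun i _ => if_pos (ht_pos i)
  have e2 : Dr t tstar = ∑ i, t i * Real.log (t i / tstar i) :=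
    Finset.sum_congr rfl fun i _ => if_pos (ht_pos i)
  have e3 : Dr tstar tvd = ∑ i, tstar i * Real.log (tstar i / tvd i) :=
    Finset.sum_congr rfl fun i _ => if_pos (hts_pos i)
  rw [e1, e2, e3, Finset.mul_sum, ← Finset.sum_add_distrib]
  apply Finset.sum_congr rfl
  intro i _
  by_cases hiK : i ∈ K
  · have h1 : tstar i = 1/(M:ℝ) := by rw [htstar i, if_pos hiK]
    have h2 : tvd i = 1/(M:ℝ) := htvdK i hiK
    rw [h1, h2, div_self (by positivity), Real.log_one]
    ring
  · have h1 : tstar i = t i / ν := by rw [htstar i, if_neg hiK]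
    have hν' : ν ≠ 0 := ne_of_gt hν
    have ht' : t i ≠ 0 := ne_of_gt (ht_pos i)
    have htvd' : tvd i ≠ 0 := ne_of_gt (htvd_pos i)
    rw [h1]
    have k1 : t i / (t i / ν) = ν := by field_simp
    have k2 : ν * (t i / ν) = t i := by field_simp
    have k3 : t i / ν / tvd i = (t i / tvd i) / ν := by ring
    rw [k1, k3, ← mul_assoc, k2,
        Real.log_div (div_ne_zero ht' htvd') hν']
    ring
end

section
/- Let t* be a probability distribution with t*_i ≥ 1/M for all i in its support, and let t^vd be a variational-distance-optimal M-type approximation of t*, satisfying t^vd_i ≥ ⌊M t*_i⌋/M ≥ 1/M and |t*_i - t^vd_i| < 1/M for all i. Then D(t*‖t^vd) ≤ log(2)·‖t* - t^vd‖_1. -/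
/-!
Split `p log (p/q) = q log (p/q) + (p - q) log (p/q)`. The first part is at most `p - q` because
`log x ≤ x - 1`, and `∑ (p - q) = 0` since `p` and `q` have the same mass. The second part
is at most `log 2 · |p - q|` as soon as `p/q ∈ [1/2, 2]`. This holds for `t*` and `t^vd`: they
differ by less than `1/M`, and on the support of `t*` both are at least `1/M`, for `t^vd` because
a positive multiple of `1/M` is at least `1/M`. Off the support the same argument forces `t^vd = 0`.
-/

open Finset

open Real

lemma mul_log_div_le_sub_add_mul_abs {p q L : ℝ} (hp : 0 < p) (hq : 0 < q)
    (hL : |log (p / q)| ≤ L) :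
    p * log (p / q) ≤ (p - q) + L * |p - q| := by
  have hgibbs : q * log (p / q) ≤ p - q := by
    have := mul_le_mul_of_nonneg_left (log_le_sub_one_of_pos (div_pos hp hq)) hq.le
    rwa [mul_sub, mul_div_cancel₀ _ hq.ne', mul_one] at this
  have hrest : (p - q) * log (p / q) ≤ L * |p - q| := by
    calc (p - q) * log (p / q) ≤ |p - q| * |log (p / q)| := by
          rw [← abs_mul]; exact le_abs_self _
      _ ≤ |p - q| * L := by gcongr
      _ = L * |p - q| := mul_comm _ _
  linarith

lemma abs_log_div_le_log_two {p q : ℝ} (hp : 0 < p) (hq : 0 < q)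
    (hpq : p ≤ 2 * q) (hqp : q ≤ 2 * p) :
    |log (p / q)| ≤ log 2 := by
  have hp' : log p ≤ log 2 + log q := by
    rw [← log_mul two_ne_zero hq.ne']; exact log_le_log hp hpq
  have hq' : log q ≤ log 2 + log p := by
    rw [← log_mul two_ne_zero hp.ne']; exact log_le_log hq hqp
  rw [log_div hp.ne' hq.ne', abs_le]
  constructor <;> linarith

theorem Dr_le_mul_sum_abs_sub {n : ℕ} {p q : Fin n → ℝ} {L : ℝ} (hp : ∀ i, 0 ≤ p i)
    (hsum : ∑ i, p i = ∑ i, q i) (hsupp : ∀ i, p i = 0 → q i = 0)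
    (hratio : ∀ i, 0 < p i → 0 < q i ∧ |log (p i / q i)| ≤ L) :
    Dr p q ≤ L * ∑ i, |p i - q i| := by
  have hterm : ∀ i, (if 0 < p i then p i * log (p i / q i) else 0)
      ≤ (p i - q i) + L * |p i - q i| := by
    intro i
    by_cases hpos : 0 < p i
    · rw [if_pos hpos]
      exact mul_log_div_le_sub_add_mul_abs hpos (hratio i hpos).1 (hratio i hpos).2
    · have hp0 : p i = 0 := le_antisymm (not_lt.mp hpos) (hp i)
      simp [hp0, hsupp i hp0]
  calc Dr p q ≤ ∑ i, ((p i - q i) + L * |p i - q i|) := sum_le_sum fun i _ => hterm i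
    _ = L * ∑ i, |p i - q i| := by
      rw [sum_add_distrib, sum_sub_distrib, hsum, sub_self, zero_add, mul_sum]

lemma natCast_div_eq_zero_or_one_div_le (c M : ℕ) :
    (c : ℝ) / M = 0 ∨ 1 / (M : ℝ) ≤ c / M := by
  rcases Nat.eq_zero_or_pos c with hc | hc
  · left; simp [hc]
  · right; gcongr; exact_mod_cast hc

lemma le_two_mul_of_abs_sub_lt {a b ε : ℝ} (hb : ε ≤ b) (h : |a - b| < ε) : a ≤ 2 * b := by
  linarith [(abs_sub_lt_iff.mp h).1]

theorem divergence_le_log2_vd_general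
    {n M : ℕ} (hM : 0 < M)
    (tstar : Fin n → ℝ) (hts_nonneg : ∀ i, 0 ≤ tstar i)
    (hts_sum : ∑ i, tstar i = 1)
    (hts_min : ∀ i, 0 < tstar i → 1 / (M : ℝ) ≤ tstar i)
    (c : Fin n → ℕ) (hc : ∑ i, c i = M)
    (tvd : Fin n → ℝ) (htvd : ∀ i, tvd i = (c i : ℝ) / M)
    (hclose : ∀ i, |tstar i - tvd i| < 1 / (M : ℝ)) :
    Dr tstar tvd ≤ Real.log 2 * ∑ i, |tstar i - tvd i| := by
  have htvd_sum : ∑ i, tvd i = 1 := by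
    simp only [htvd, ← sum_div, ← Nat.cast_sum, hc]
    exact div_self (Nat.cast_ne_zero.mpr hM.ne')
  have hgrid : ∀ i, tvd i = 0 ∨ 1 / (M : ℝ) ≤ tvd i := fun i =>
    htvd i ▸ natCast_div_eq_zero_or_one_div_le (c i) M
  refine Dr_le_mul_sum_abs_sub hts_nonneg (hts_sum.trans htvd_sum.symm) ?_ ?_
  · intro i h0
    have := hclose i
    rw [h0, zero_sub, abs_neg] at this
    exact (hgrid i).resolve_right fun h => by linarith [le_abs_self (tvd i)]
  · intro i hpos
    have htvd_pos : 0 < tvd i := by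
      linarith [hts_min i hpos, (abs_sub_lt_iff.mp (hclose i)).1]
    have htvd_min : 1 / (M : ℝ) ≤ tvd i := (hgrid i).resolve_left htvd_pos.ne'
    refine ⟨htvd_pos, abs_log_div_le_log_two hpos htvd_pos ?_ ?_⟩
    · exact le_two_mul_of_abs_sub_lt htvd_min (hclose i)
    · exact le_two_mul_of_abs_sub_lt (hts_min i hpos) (abs_sub_comm (tstar i) (tvd i) ▸ hclose i)

theorem divergence_le_log2_vd
    {n M : ℕ} (hn : 0 < n) (hM : 0 < M)
    (tstar : Fin n → ℝ) (hts_nonneg : ∀ i, 0 ≤ tstar i)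
    (hts_sum : ∑ i, tstar i = 1)
    (hts_min : ∀ i, 0 < tstar i → 1 / (M : ℝ) ≤ tstar i)
    (c : Fin n → ℕ) (hc : ∑ i, c i = M)
    (tvd : Fin n → ℝ) (htvd : ∀ i, tvd i = (c i : ℝ) / M)
    (hvdopt : ∀ c' : Fin n → ℕ, ∑ i, c' i = M →
      ∑ i, |tvd i - tstar i| ≤ ∑ i, |(c' i : ℝ) / M - tstar i|)
    (hfloor : ∀ i, (⌊(M : ℝ) * tstar i⌋ : ℝ) / M ≤ tvd i)
    (hclose : ∀ i, |tstar i - tvd i| < 1 / (M : ℝ)) :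
    Dr tstar tvd ≤ Real.log 2 * ∑ i, |tstar i - tvd i| :=
  divergence_le_log2_vd_general hM tstar hts_nonneg hts_sum hts_min c hc tvd htvd hclose
end

section
/- For probability distributions p, q on the same finite set with q_i > 0 whenever p_i > 0, let r = max_{i: p_i>0} p_i/q_i. If r ≤ 2, then D(p‖q) ≤ log(2)·‖p - q‖_1. -/
/-!
Write `c(r) = r log r / (r - 1)`. By convexity of `t ↦ t log t`, on `[1, r]` it lies below its
chord through `(1, 0)` and `(r, r log r)`, so `p log (p / q) ≤ c(r) (p - q)` whenever
`q < p ≤ r q`; when `p ≤ q` the term is nonpositive. Hence `D(p‖q) ≤ c(r) ∑ (pᵢ - qᵢ)⁺`, and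
since `p` and `q` have the same mass the positive parts carry half of `‖p - q‖₁`.
For `r = 2` the constant `c(2) / 2` is `log 2`.
-/

open Finset

open Real

lemma mul_log_le_chord {r t : ℝ} (hr : 1 < r) (h1 : 1 ≤ t) (h2 : t ≤ r) :
    t * log t ≤ r * log r / (r - 1) * (t - 1) := by
  have hr' : r - 1 ≠ 0 := by linarith
  have h := convexOn_mul_log.2 (Set.mem_Ici.2 zero_le_one)
    (Set.mem_Ici.2 (zero_le_one.trans hr.le))
    (div_nonneg (sub_nonneg.2 h2) (by linarith)) (div_nonneg (sub_nonneg.2 h1) (by linarith))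
    (show (r - t) / (r - 1) + (t - 1) / (r - 1) = 1 by field_simp; ring)
  have ht : (r - t) / (r - 1) * 1 + (t - 1) / (r - 1) * r = t := by field_simp; ring
  simp only [smul_eq_mul, ht, log_one, mul_zero, zero_add] at h
  calc t * log t ≤ (t - 1) / (r - 1) * (r * log r) := h
    _ = r * log r / (r - 1) * (t - 1) := by ring

lemma ite_mul_log_div_le_mul_posPart {r x y : ℝ} (hr : 1 < r) (hx : 0 ≤ x)
    (hy : 0 < x → 0 < y) (hxy : 0 < x → x / y ≤ r) :
    (if 0 < x then x * log (x / y) else 0) ≤ r * log r / (r - 1) * (x - y)⁺ := by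
  have hc : 0 ≤ r * log r / (r - 1) :=
    div_nonneg (mul_nonneg (by linarith) (log_nonneg hr.le)) (by linarith)
  have hrhs : 0 ≤ r * log r / (r - 1) * (x - y)⁺ := mul_nonneg hc (posPart_nonneg _)
  split_ifs with hx0
  · have hy0 := hy hx0
    rcases le_or_gt x y with hle | hgt
    · have hlog : log (x / y) ≤ 0 := log_nonpos (by positivity) ((div_le_one hy0).2 hle)
      exact (mul_nonpos_of_nonneg_of_nonpos hx hlog).trans hrhs
    · have hchord := mul_log_le_chord hr ((one_le_div hy0).2 hgt.le) (hxy hx0)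
      rw [posPart_eq_self.2 (by linarith)]
      calc x * log (x / y) = y * (x / y * log (x / y)) := by field_simp
        _ ≤ y * (r * log r / (r - 1) * (x / y - 1)) := by gcongr
        _ = r * log r / (r - 1) * (x - y) := by field_simp
  · exact hrhs

lemma sum_posPart_sub_eq_half_sum_abs_sub {ι : Type*} (s : Finset ι) (x y : ι → ℝ)
    (h : ∑ i ∈ s, x i = ∑ i ∈ s, y i) :
    ∑ i ∈ s, (x i - y i)⁺ = (∑ i ∈ s, |x i - y i|) / 2 := by
  have hdiff : ∑ i ∈ s, (x i - y i)⁺ - ∑ i ∈ s, (x i - y i)⁻ = 0 := by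
    rw [← sum_sub_distrib]
    simp only [posPart_sub_negPart]
    rw [sum_sub_distrib, h, sub_self]
  have hadd : ∑ i ∈ s, (x i - y i)⁺ + ∑ i ∈ s, (x i - y i)⁻ = ∑ i ∈ s, |x i - y i| := by
    simp only [← sum_add_distrib, posPart_add_negPart]
  linarith

theorem Dr_le_mul_sum_abs_sub_of_div_le {n : ℕ} (p q : Fin n → ℝ) (hp_nonneg : ∀ i, 0 ≤ p i)
    (hsum : ∑ i, p i = ∑ i, q i) (habs : ∀ i, 0 < p i → 0 < q i) {r : ℝ} (hr1 : 1 < r)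
    (hr : ∀ i, 0 < p i → p i / q i ≤ r) :
    Dr p q ≤ r * log r / (r - 1) / 2 * ∑ i, |p i - q i| :=
  calc Dr p q ≤ ∑ i, r * log r / (r - 1) * (p i - q i)⁺ :=
        sum_le_sum fun i _ => ite_mul_log_div_le_mul_posPart hr1 (hp_nonneg i) (habs i) (hr i)
    _ = r * log r / (r - 1) / 2 * ∑ i, |p i - q i| := by
        rw [← mul_sum, sum_posPart_sub_eq_half_sum_abs_sub _ _ _ hsum]; ring

theorem reverse_pinsker_r_le_two_general
    {n : ℕ} (p q : Fin n → ℝ)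
    (hp_nonneg : ∀ i, 0 ≤ p i)
    (hp_sum : ∑ i, p i = 1) (hq_sum : ∑ i, q i = 1)
    (habs : ∀ i, 0 < p i → 0 < q i)
    (hr : ∀ i, 0 < p i → p i / q i ≤ 2) :
    Dr p q ≤ Real.log 2 * ∑ i, |p i - q i| := by
  have h := Dr_le_mul_sum_abs_sub_of_div_le p q hp_nonneg (hp_sum.trans hq_sum.symm) habs one_lt_two hr
  norm_num at h
  exact h

theorem reverse_pinsker_r_le_two
    {n : ℕ} (p q : Fin n → ℝ)
    (hp_nonneg : ∀ i, 0 ≤ p i) (hq_nonneg : ∀ i, 0 ≤ q i)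
    (hp_sum : ∑ i, p i = 1) (hq_sum : ∑ i, q i = 1)
    (habs : ∀ i, 0 < p i → 0 < q i)
    (hr : ∀ i, 0 < p i → p i / q i ≤ 2) :
    Dr p q ≤ Real.log 2 * ∑ i, |p i - q i| :=
  reverse_pinsker_r_le_two_general p q hp_nonneg hp_sum hq_sum habs hr
end
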